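/- Let (E_n)_{n≥1} be a sequence of events in a probability space and S_n = Σ_{k=1}^n 1_{E_k}. Suppose there exists a summable sequence (ρ_n) of nonnegative reals such that for all i ≠ j, P(E_i ∩ E_j) − P(E_i)P(E_j) ≤ ρ_{|i−j|} √(P(E_i)P(E_j)), and suppose E[S_n] → ∞. Then S_n / E[S_n] → 1 almost surely. -/

import Mathlib

/-!
The variance of `S_n` is at most `(1 + 2 ∑ ρ) E[S_n]`: bound each covariance by
`ρ_{|i-j|} (P(E_i) + P(E_j)) / 2` (AM–GM) and note that for fixed `i` the map `j ↦ |i - j|` is at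
most two-to-one. Chebyshev's inequality and Borel–Cantelli then give `S_n / E[S_n] → 1` along the
indices `n_k` where `E[S_n]` first exceeds `(k + 1)²`, since `∑ 1 / E[S_{n_k}] < ∞`. As `S_n` and
`E[S_n]` are monotone and `E[S_{n_{k+1}}] / E[S_{n_k}] → 1`, the whole sequence is squeezed between
consecutive terms of the subsequence.
-/

open MeasureTheory ProbabilityTheory Filter Finset Topology

lemma sum_sum_le_of_le_mul_add_div_two {ι : Type*} {s : Finset ι} {c w : ι → ι → ℝ} {v : ι → ℝ}
    {K : ℝ} (hw : ∀ i j, w i j = w j i) (hv : ∀ i ∈ s, 0 ≤ v i)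
    (hK : ∀ i ∈ s, ∑ j ∈ s, w i j ≤ K) (hc : ∀ i ∈ s, ∀ j ∈ s, c i j ≤ w i j * (v i + v j) / 2) :
    ∑ i ∈ s, ∑ j ∈ s, c i j ≤ K * ∑ i ∈ s, v i := by
  have hswap : ∑ i ∈ s, ∑ j ∈ s, w i j * v j = ∑ i ∈ s, ∑ j ∈ s, w i j * v i := by
    rw [sum_comm]; simp only [hw]
  calc ∑ i ∈ s, ∑ j ∈ s, c i j ≤ ∑ i ∈ s, ∑ j ∈ s, w i j * (v i + v j) / 2 :=
        sum_le_sum fun i hi => sum_le_sum fun j hj => hc i hi j hj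
    _ = ∑ i ∈ s, (∑ j ∈ s, w i j) * v i := by
        simp only [mul_add, add_div, sum_add_distrib, ← sum_div, hswap, sum_mul]
        ring
    _ ≤ ∑ i ∈ s, K * v i := sum_le_sum fun i hi => mul_le_mul_of_nonneg_right (hK i hi) (hv i hi)
    _ = K * ∑ i ∈ s, v i := (mul_sum ..).symm

lemma sum_comp_le_tsum_of_injOn {ι : Type*} {f : ℕ → ℝ} (hf0 : ∀ n, 0 ≤ f n) (hf : Summable f)
    {t : Finset ι} {g : ι → ℕ} (hg : Set.InjOn g t) : ∑ j ∈ t, f (g j) ≤ ∑' n, f n := by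
  classical
  rw [← sum_image hg]
  exact hf.sum_le_tsum _ fun n _ => hf0 n

lemma sum_dist_le_two_mul_tsum {ρ : ℕ → ℝ} (hρ0 : ∀ n, 0 ≤ ρ n) (hρ : Summable ρ) (i : ℕ)
    (t : Finset ℕ) : ∑ j ∈ t, ρ (Nat.dist i j) ≤ 2 * ∑' d, ρ d := by
  rw [← sum_filter_add_sum_filter_not t (· < i), two_mul]
  gcongr <;> refine sum_comp_le_tsum_of_injOn hρ0 hρ fun x hx y hy h => ?_ <;>
    simp only [coe_filter, Set.mem_ofPred_eq, Nat.dist] at hx hy h <;> omega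

lemma tendsto_nhds_of_eventually_dist_lt_one_div_add_one {α : Type*} {l : Filter α} {u : α → ℝ}
    {a : ℝ} (h : ∀ j : ℕ, ∀ᶠ x in l, dist (u x) a < 1 / ((j : ℝ) + 1)) : Tendsto u l (𝓝 a) := by
  refine Metric.tendsto_nhds.2 fun ε hε => ?_
  obtain ⟨j, hj⟩ := exists_nat_one_div_lt hε
  exact (h j).mono fun x hx => hx.trans hj

lemma tendsto_div_of_monotone_of_tendsto_div_subseq {S m : ℕ → ℝ} (hS : Monotone S)
    (hS0 : ∀ n, 0 ≤ S n) (hm : Monotone m) {N : ℕ → ℕ} (hN : StrictMono N)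
    (hmN : ∀ k, 0 < m (N k)) (hratio : Tendsto (fun k => m (N (k + 1)) / m (N k)) atTop (𝓝 1))
    (hlim : Tendsto (fun k => S (N k) / m (N k)) atTop (𝓝 1)) :
    Tendsto (fun n => S n / m n) atTop (𝓝 1) := by
  have hbetween : ∀ n, N 0 ≤ n → ∃ k, N k ≤ n ∧ n < N (k + 1) := fun n hn => by
    obtain ⟨k, hk, hk'⟩ :=
      hN.exists_between_of_tendsto_atTop hN.tendsto_atTop (x := n + 1) (by omega)
    exact ⟨k, by omega, by omega⟩
  choose! κ hκ using hbetween
  have hκ_top : Tendsto κ atTop atTop := by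
    refine tendsto_atTop_atTop.2 fun K => ⟨N (K + 1), fun n hn => ?_⟩
    have := (hκ n ((hN.monotone (Nat.zero_le _)).trans hn)).2
    have := hN.lt_iff_lt.1 (hn.trans_lt this)
    omega
  have hlower : Tendsto (fun n => S (N (κ n)) / m (N (κ n)) / (m (N (κ n + 1)) / m (N (κ n))))
      atTop (𝓝 1) := by
    have := (hlim.comp hκ_top).div (hratio.comp hκ_top) one_ne_zero
    rwa [div_one] at this
  have hupper : Tendsto (fun n => S (N (κ n + 1)) / m (N (κ n + 1)) *
      (m (N (κ n + 1)) / m (N (κ n)))) atTop (𝓝 1) := by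
    have := ((hlim.comp (tendsto_add_atTop_nat 1)).comp hκ_top).mul (hratio.comp hκ_top)
    rwa [mul_one] at this
  refine tendsto_of_tendsto_of_tendsto_of_le_of_le' hlower hupper ?_ ?_ <;>
    filter_upwards [eventually_ge_atTop (N 0)] with n hn <;>
    obtain ⟨hlo, hhi⟩ := hκ n hn <;>
    have hmn : 0 < m n := (hmN _).trans_le (hm hlo)
  · rw [div_div_div_cancel_right₀ (hmN _).ne']
    calc S (N (κ n)) / m (N (κ n + 1)) ≤ S (N (κ n)) / m n := by
          gcongr
          exacts [hS0 _, hm hhi.le]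
      _ ≤ S n / m n := by gcongr; exact hS hlo
  · rw [div_mul_div_cancel₀ (hmN _).ne']
    calc S n / m n ≤ S (N (κ n + 1)) / m n := by gcongr; exact hS hhi.le
      _ ≤ S (N (κ n + 1)) / m (N (κ n)) := by
          gcongr
          exacts [hS0 _, hmN _, hm hlo]

lemma exists_strictMono_sq_le_le_sq_add_one {m : ℕ → ℝ} (hm : Monotone m) (hm0 : m 0 = 0)
    (hinc : ∀ n, m (n + 1) ≤ m n + 1) (htop : Tendsto m atTop atTop) :
    ∃ N : ℕ → ℕ, StrictMono N ∧
      ∀ k : ℕ, ((k : ℝ) + 1) ^ 2 ≤ m (N k) ∧ m (N k) ≤ ((k : ℝ) + 1) ^ 2 + 1 := by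
  classical
  have hex : ∀ k : ℕ, ∃ n, ((k : ℝ) + 1) ^ 2 ≤ m n :=
    fun k => (htop.eventually_ge_atTop _).exists
  have hbounds : ∀ k : ℕ, ((k : ℝ) + 1) ^ 2 ≤ m (Nat.find (hex k)) ∧
      m (Nat.find (hex k)) ≤ ((k : ℝ) + 1) ^ 2 + 1 := fun k => by
    refine ⟨Nat.find_spec (hex k), ?_⟩
    cases h : Nat.find (hex k) with
    | zero => rw [hm0]; positivity
    | succ l =>
      have := Nat.find_min (hex k) (show l < Nat.find (hex k) by omega)
      linarith [hinc l]
  refine ⟨fun k => Nat.find (hex k), strictMono_nat_of_lt_succ fun k => ?_, hbounds⟩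
  by_contra! h
  have := hm h
  have := (hbounds (k + 1)).1
  have := (hbounds k).2
  have : (0 : ℝ) ≤ k := k.cast_nonneg
  push_cast at *
  nlinarith

lemma memLp_indicator_one {Ω : Type*} [MeasurableSpace Ω] {μ : Measure Ω} [IsFiniteMeasure μ]
    {A : Set Ω} (hA : MeasurableSet A) : MemLp (A.indicator (1 : Ω → ℝ)) 2 μ :=
  memLp_indicator_const 2 hA 1 (Or.inr (measure_ne_top μ A))

section

variable {Ω : Type*} [MeasurableSpace Ω] {μ : Measure Ω} [IsProbabilityMeasure μ]

lemma covariance_indicator_one {A B : Set Ω} (hA : MeasurableSet A) (hB : MeasurableSet B) :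
    cov[A.indicator (1 : Ω → ℝ), B.indicator 1; μ] = μ.real (A ∩ B) - μ.real A * μ.real B := by
  rw [covariance_eq_sub (memLp_indicator_one hA) (memLp_indicator_one hB),
    ← Set.inter_indicator_one, integral_indicator_one hA, integral_indicator_one hB,
    integral_indicator_one (hA.inter hB)]

lemma variance_sum_indicator_le {E : ℕ → Set Ω} (hE : ∀ n, MeasurableSet (E n)) {ρ : ℕ → ℝ}
    (hρ0 : ∀ n, 0 ≤ ρ n) (hρ : Summable ρ) {s : Finset ℕ}
    (hcorr : ∀ i ∈ s, ∀ j ∈ s, i ≠ j → μ.real (E i ∩ E j) - μ.real (E i) * μ.real (E j) ≤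
      ρ (Nat.dist i j) * √(μ.real (E i) * μ.real (E j))) :
    Var[fun ω => ∑ k ∈ s, (E k).indicator (1 : Ω → ℝ) ω; μ] ≤
      (1 + 2 * ∑' d, ρ d) * ∑ k ∈ s, μ.real (E k) := by
  rw [variance_fun_sum' fun k _ => memLp_indicator_one (hE k)]
  -- The diagonal weight `1` absorbs `Var[1_{E i}] = P(E i) - P(E i)² ≤ P(E i)`.
  refine sum_sum_le_of_le_mul_add_div_two
    (w := fun i j => ρ (Nat.dist i j) + if i = j then 1 else 0)
    (fun i j => by simp only [Nat.dist_comm i j, eq_comm]) (fun i _ => measureReal_nonneg)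
    (fun i hi => ?_) fun i hi j hj => ?_
  · rw [sum_add_distrib, sum_ite_eq]
    have := sum_dist_le_two_mul_tsum hρ0 hρ i s
    rw [if_pos hi]
    linarith
  · rw [covariance_indicator_one (hE i) (hE j)]
    obtain rfl | hij := eq_or_ne i j
    · rw [Set.inter_self]
      have := hρ0 (Nat.dist i i)
      have := measureReal_nonneg (μ := μ) (s := E i)
      rw [if_pos rfl]
      nlinarith
    · have h_amgm : √(μ.real (E i) * μ.real (E j)) ≤ (μ.real (E i) + μ.real (E j)) / 2 := by
        have := four_mul_le_sq_add (μ.real (E i)) (μ.real (E j))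
        rw [Real.sqrt_le_left (by positivity)]
        linarith
      rw [if_neg hij, add_zero]
      calc _ ≤ ρ (Nat.dist i j) * √(μ.real (E i) * μ.real (E j)) := hcorr i hi j hj hij
        _ ≤ ρ (Nat.dist i j) * ((μ.real (E i) + μ.real (E j)) / 2) := by gcongr; exact hρ0 _
        _ = _ := by ring

lemma ae_tendsto_div_integral_of_summable_inv {T : ℕ → Ω → ℝ} (hT : ∀ k, MemLp (T k) 2 μ) {C : ℝ}
    (hvar : ∀ k, Var[T k; μ] ≤ C * μ[T k]) (hpos : ∀ k, 0 < μ[T k])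
    (hsum : Summable fun k => (μ[T k])⁻¹) :
    ∀ᵐ ω ∂μ, Tendsto (fun k => T k ω / μ[T k]) atTop (𝓝 1) := by
  have hdev : ∀ ε > 0, ∀ᵐ ω ∂μ, ∀ᶠ k in atTop, ¬ ε * μ[T k] ≤ |T k ω - μ[T k]| := by
    intro ε hε
    refine ae_eventually_notMem (ne_top_of_le_ne_top
      ((hsum.mul_left (C / ε ^ 2)).tsum_ofReal_ne_top) (ENNReal.tsum_le_tsum fun k => ?_))
    refine (meas_ge_le_variance_div_sq (hT k) (mul_pos hε (hpos k))).trans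
      (ENNReal.ofReal_le_ofReal ?_)
    calc Var[T k; μ] / (ε * μ[T k]) ^ 2 ≤ C * μ[T k] / (ε * μ[T k]) ^ 2 := by
          gcongr; exact hvar k
      _ = C / ε ^ 2 * (μ[T k])⁻¹ := by field_simp [(hpos k).ne']
  have hdev' := ae_all_iff.2 fun j : ℕ => hdev (1 / ((j : ℝ) + 1)) (by positivity)
  filter_upwards [hdev'] with ω hω
  refine tendsto_nhds_of_eventually_dist_lt_one_div_add_one fun j => (hω j).mono fun k hk => ?_
  rwa [Real.dist_eq, div_sub_one (hpos k).ne', abs_div, abs_of_pos (hpos k), div_lt_iff₀ (hpos k),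
    ← not_le]

theorem ae_tendsto_div_integral_of_variance_le {S : ℕ → Ω → ℝ} (hS : ∀ n, MemLp (S n) 2 μ)
    (hS0 : ∀ n ω, 0 ≤ S n ω) (hmono : ∀ ω, Monotone fun n => S n ω) (hm0 : μ[S 0] = 0)
    (hinc : ∀ n, μ[S (n + 1)] ≤ μ[S n] + 1) (htop : Tendsto (fun n => μ[S n]) atTop atTop)
    {C : ℝ} (hvar : ∀ n, Var[S n; μ] ≤ C * μ[S n]) :
    ∀ᵐ ω ∂μ, Tendsto (fun n => S n ω / μ[S n]) atTop (𝓝 1) := by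
  have hm : Monotone fun n => μ[S n] := fun a b hab =>
    integral_mono ((hS a).integrable one_le_two) ((hS b).integrable one_le_two) fun ω => hmono ω hab
  obtain ⟨N, hN, hNb⟩ := exists_strictMono_sq_le_le_sq_add_one hm hm0 hinc htop
  have hpos : ∀ k, 0 < μ[S (N k)] := fun k =>
    (by positivity : (0 : ℝ) < ((k : ℝ) + 1) ^ 2).trans_le (hNb k).1
  have hsum : Summable fun k => (μ[S (N k)])⁻¹ := by
    refine Summable.of_nonneg_of_le (fun k => inv_nonneg.2 (hpos k).le)
      (fun k => inv_anti₀ (by positivity) (hNb k).1) ?_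
    simpa using (summable_nat_add_iff 1).2 (Real.summable_nat_pow_inv.2 one_lt_two)
  have hratio : Tendsto (fun k => μ[S (N (k + 1))] / μ[S (N k)]) atTop (𝓝 1) := by
    have hlim : Tendsto (fun k : ℕ => 1 + 4 * (1 / ((k : ℝ) + 1))) atTop (𝓝 1) := by
      simpa using (tendsto_one_div_add_atTop_nhds_zero_nat (𝕜 := ℝ)).const_mul 4 |>.const_add 1
    refine tendsto_of_tendsto_of_tendsto_of_le_of_le tendsto_const_nhds hlim
      (fun k => (one_le_div (hpos k)).2 (hm (hN.monotone k.le_succ))) fun k => ?_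
    rw [div_le_iff₀ (hpos k)]
    calc μ[S (N (k + 1))] ≤ ((k : ℝ) + 1) ^ 2 + 4 * ((k : ℝ) + 1) := by
          have := (hNb (k + 1)).2
          push_cast at this
          nlinarith
      _ = (1 + 4 * (1 / ((k : ℝ) + 1))) * ((k : ℝ) + 1) ^ 2 := by field_simp
      _ ≤ _ := by gcongr; exact (hNb k).1
  filter_upwards [ae_tendsto_div_integral_of_summable_inv (fun k => hS (N k))
    (fun k => hvar (N k)) hpos hsum] with ω hω
  exact tendsto_div_of_monotone_of_tendsto_div_subseq (hmono ω) (fun n => hS0 n ω) hm hN hpos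
    hratio hω

end

theorem stmt4 {Ω : Type*} [MeasurableSpace Ω] (μ : Measure Ω) [IsProbabilityMeasure μ]
    (E : ℕ → Set Ω) (hE : ∀ n, MeasurableSet (E n))
    (ρ : ℕ → ℝ) (hρ0 : ∀ n, 0 ≤ ρ n) (hρsum : Summable ρ)
    (hcorr : ∀ i j, 1 ≤ i → 1 ≤ j → i ≠ j →
      (μ (E i ∩ E j)).toReal - (μ (E i)).toReal * (μ (E j)).toReal ≤
        ρ (Nat.dist i j) * Real.sqrt ((μ (E i)).toReal * (μ (E j)).toReal))
    (hdiv : Tendsto (fun n : ℕ => ∑ k ∈ Finset.Icc 1 n, (μ (E k)).toReal) atTop atTop) :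
    ∀ᵐ ω ∂μ,
      Tendsto
        (fun n : ℕ =>
          (∑ k ∈ Finset.Icc 1 n, (E k).indicator (fun _ => (1 : ℝ)) ω) /
            (∑ k ∈ Finset.Icc 1 n, (μ (E k)).toReal))
        atTop (nhds 1) := by
  set S : ℕ → Ω → ℝ := fun n ω => ∑ k ∈ Icc 1 n, (E k).indicator 1 ω
  have hmean : ∀ n, μ[S n] = ∑ k ∈ Icc 1 n, μ.real (E k) := fun n => by
    rw [integral_finsetSum _ fun k _ => (integrable_const 1).indicator (hE k)]
    exact sum_congr rfl fun k _ => integral_indicator_one (hE k)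
  have hvar : ∀ n, Var[S n; μ] ≤ (1 + 2 * ∑' d, ρ d) * μ[S n] := fun n => by
    rw [hmean]
    exact variance_sum_indicator_le hE hρ0 hρsum fun i hi j hj hij =>
      hcorr i j (mem_Icc.1 hi).1 (mem_Icc.1 hj).1 hij
  have hinc : ∀ n, μ[S (n + 1)] ≤ μ[S n] + 1 := fun n => by
    rw [hmean, hmean, sum_Icc_succ_top (by omega)]
    gcongr
    exact measureReal_le_one
  have hlim := ae_tendsto_div_integral_of_variance_le (S := S)
    (fun n => memLp_finsetSum _ fun k _ => memLp_indicator_one (hE k))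
    (fun n ω => sum_nonneg fun k _ => Set.indicator_nonneg (fun _ _ => zero_le_one) ω)
    (fun ω a b hab => sum_le_sum_of_subset_of_nonneg (Icc_subset_Icc_right hab)
      fun k _ _ => Set.indicator_nonneg (fun _ _ => zero_le_one) ω)
    (by simp [hmean]) hinc (by simp only [hmean]; exact hdiv) hvar
  simp only [hmean] at hlim
  exact hlim
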